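/- For the sequence w_n = n and all n ≥ k ≥ 1, c_{n,k}(n) = C(n+k-1, n-k). -/

import Mathlib

/-!
`c_{n,k}(w)` is the coefficient of `xⁿ` in `(w₁x + ⋯ + wₙxⁿ)ᵏ` (multinomial
theorem). For `wᵢ = i` this polynomial agrees up to degree `n` with `x/(1-x)² = ∑ m xᵐ`, so the
coefficient equals that of `xⁿ` in `xᵏ/(1-x)^{2k}`, namely `C(n+k-1, n-k)`.
-/

open Finset

/-- `colorCompCount w n k = c_{n,k}(w)`: the sum over all `(k₁,…,kₙ)` with
`Σ i·kᵢ = n` and `Σ kᵢ = k` of the multinomial `k!/(k₁!⋯kₙ!)` times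
`w₁^{k₁} ⋯ wₙ^{kₙ}`.  (Each `kᵢ ≤ k`, so we may range over `Fin n → Fin (k+1)`.) -/
def colorCompCount (w : ℕ → ℤ) (n k : ℕ) : ℤ :=
  ∑ f ∈ Finset.univ.filter (fun f : Fin n → Fin (k + 1) =>
      (∑ i : Fin n, ((i : ℕ) + 1) * (f i : ℕ)) = n ∧ (∑ i : Fin n, (f i : ℕ)) = k),
    (Nat.multinomial Finset.univ (fun i => (f i : ℕ)) : ℤ) *
      ∏ i : Fin n, w ((i : ℕ) + 1) ^ (f i : ℕ)

open PowerSeries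

noncomputable def colorSeries (w : ℕ → ℤ) (n : ℕ) : ℤ⟦X⟧ :=
  ∑ i : Fin n, C (w ((i : ℕ) + 1)) * X ^ ((i : ℕ) + 1)

lemma PowerSeries.prod_C_mul_X_pow_pow {R ι : Type*} [CommSemiring R] (s : Finset ι)
    (a : ι → R) (e g : ι → ℕ) :
    ∏ i ∈ s, (C (a i) * X ^ e i) ^ g i = C (∏ i ∈ s, a i ^ g i) * X ^ (∑ i ∈ s, e i * g i) := by
  simp only [mul_pow, ← map_pow, ← pow_mul, prod_mul_distrib, prod_pow_eq_pow_sum, map_prod]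

lemma sum_filter_fin_eq_sum_filter_piAntidiag {ι M : Type*} [Fintype ι] [DecidableEq ι]
    [AddCommMonoid M] (k : ℕ) (p : (ι → ℕ) → Prop) [DecidablePred p] (φ : (ι → ℕ) → M) :
    ∑ f ∈ univ.filter (fun f : ι → Fin (k + 1) => p (fun i => f i) ∧ ∑ i, (f i : ℕ) = k),
        φ (fun i => f i) =
      ∑ g ∈ (piAntidiag univ k).filter p, φ g := by
  refine sum_bij (fun f _ i => (f i : ℕ)) ?_ ?_ ?_ (fun _ _ => rfl)
  · intro f hf
    simp_all
  · intro f _ f' _ h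
    funext i
    exact Fin.ext (congrFun h i)
  · intro g hg
    simp only [mem_filter, mem_piAntidiag, mem_univ, implies_true, and_true] at hg
    have hle : ∀ i, g i < k + 1 := fun i =>
      Nat.lt_succ_of_le (hg.1 ▸ single_le_sum (fun j _ => Nat.zero_le (g j)) (mem_univ i))
    exact ⟨fun i => ⟨g i, hle i⟩, by simpa using ⟨hg.2, hg.1⟩, rfl⟩

lemma colorCompCount_eq_coeff_pow (w : ℕ → ℤ) (n k : ℕ) :
    colorCompCount w n k = coeff n (colorSeries w n ^ k) := by
  simp only [colorSeries, sum_pow_eq_sum_piAntidiag, map_sum, prod_C_mul_X_pow_pow,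
    ← map_natCast C, ← mul_assoc, ← map_mul, coeff_C_mul_X_pow]
  rw [← sum_filter]
  simp only [@eq_comm ℕ n]
  exact sum_filter_fin_eq_sum_filter_piAntidiag k
    (fun g => ∑ i : Fin n, ((i : ℕ) + 1) * g i = n)
    (fun g => (Nat.multinomial univ g : ℤ) * ∏ i : Fin n, w ((i : ℕ) + 1) ^ g i)

lemma coeff_colorSeries (w : ℕ → ℤ) (n m : ℕ) :
    coeff m (colorSeries w n) = if m ≠ 0 ∧ m ≤ n then w m else 0 := by
  simp only [colorSeries, map_sum, coeff_C_mul_X_pow]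
  rcases m with _ | m
  · simp
  · rw [Fin.sum_univ_eq_sum_range (fun i => if m + 1 = i + 1 then w (i + 1) else 0)]
    simp

lemma PowerSeries.coeff_pow_eq_of_coeff_eq {R : Type*} [CommSemiring R] {f g : R⟦X⟧} {N : ℕ}
    (h : ∀ m ≤ N, coeff m f = coeff m g) (k : ℕ) : coeff N (f ^ k) = coeff N (g ^ k) := by
  have htrunc : trunc (N + 1) f = trunc (N + 1) g := by
    ext m
    simp only [coeff_trunc]
    split_ifs with hm
    exacts [h m (Nat.le_of_lt_succ hm), rfl]
  rw [← coeff_coe_trunc_of_lt N.lt_succ_self, ← trunc_trunc_pow, htrunc, trunc_trunc_pow,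
    coeff_coe_trunc_of_lt N.lt_succ_self]

lemma PowerSeries.invOneSubPow_pow (R : Type*) [CommRing R] (d k : ℕ) :
    invOneSubPow R d ^ k = invOneSubPow R (d * k) := by
  simp only [invOneSubPow_eq_inv_one_sub_pow, pow_mul]

-- For `d = 0` the truncated subtraction gives `C(m - 1, m) = [m = 0]`, the coefficients of `1`.
lemma PowerSeries.coeff_invOneSubPow (R : Type*) [CommRing R] (d m : ℕ) :
    coeff m (invOneSubPow R d : R⟦X⟧) = Nat.choose (d + m - 1) m := by
  rcases d with _ | d
  · rcases m with _ | m <;> simp [invOneSubPow_zero, coeff_one]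
  · rw [invOneSubPow_val_succ_eq_mk_add_choose, coeff_mk, Nat.add_right_comm,
      Nat.add_sub_cancel, Nat.choose_symm_add]

lemma PowerSeries.coeff_X_mul_invOneSubPow_two (R : Type*) [CommRing R] (m : ℕ) :
    coeff m (X * (invOneSubPow R 2 : R⟦X⟧)) = (m : R) := by
  rcases m with _ | m
  · simp
  · rw [coeff_succ_X_mul, coeff_invOneSubPow]
    simp [Nat.add_comm 1 m]

theorem colorCompCount_id_general (n k : ℕ) (hn : k ≤ n) :
    colorCompCount (fun m => (m : ℤ)) n k = (Nat.choose (n + k - 1) (n - k) : ℤ) := by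
  have hseries : ∀ m ≤ n, coeff m (colorSeries (fun m => (m : ℤ)) n) =
      coeff m (X * (invOneSubPow ℤ 2 : ℤ⟦X⟧)) := by
    intro m hm
    rw [coeff_colorSeries, coeff_X_mul_invOneSubPow_two]
    rcases m with _ | m <;> simp [hm]
  rw [colorCompCount_eq_coeff_pow, coeff_pow_eq_of_coeff_eq hseries, mul_pow,
    ← Units.val_pow_eq_pow_val, invOneSubPow_pow, coeff_X_pow_mul', if_pos hn, coeff_invOneSubPow]
  congr 2
  omega

/-- For the sequence `wₙ = n`, the number of `n`-color compositions of `n` with `k`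
parts is `c_{n,k}(n) = C(n+k-1, n-k)`. -/
theorem colorCompCount_id (n k : ℕ) (hk : 1 ≤ k) (hn : k ≤ n) :
    colorCompCount (fun m => (m : ℤ)) n k = (Nat.choose (n + k - 1) (n - k) : ℤ) :=
  colorCompCount_id_general n k hn
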